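/- The two notions of quasi-locality differ: Let X := ℤ × {0,1}, for n ∈ ℤ set P_n := {((n,0),(n,1)), ((n,1),(n,0))}, and let 𝒞 := {V ⊆ X × X : V ⊆ Δ_X ∪ ⋃_{n∈F} P_n for some finite F ⊆ ℤ}; then 𝒞 is a coarse structure on X, compatible with the bornology of finite subsets. Let H := ℓ²(X;ℂ) with standard orthonormal basis (δ_x)_{x∈X}, let φ be the representation of bounded functions on X by multiplication operators, and let A ∈ B(H) be the bounded operator determined by A δ_{(n,0)} = e^{−|n|} δ_{(n,1)} and A δ_{(n,1)} = 0 for all n ∈ ℤ. Then: (a) for every ε > 0 there exists an entourage U ∈ 𝒞 such that ‖φ(χ_{B'}) A φ(χ_B)‖ ≤ ε for all subsets B, B' ⊆ X with U[B] ∩ U[B'] = ∅; but (b) A is not quasi-local: there is no entourage U ∈ 𝒞 such that for every ε > 0 there exists n ∈ ℕ with ‖φ(χ_{B'}) A φ(χ_B)‖ ≤ ε for all Uⁿ-separated subsets B, B' of X. -/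

import Mathlib

/-- The `U`-thickening `U[B] := {x : ∃ b ∈ B, (x, b) ∈ U}` of a subset `B` by an
entourage `U`. -/
def thick {X : Type*} (U : Set (X × X)) (B : Set X) : Set X :=
  {x | ∃ b ∈ B, (x, b) ∈ U}

/-- Composition of relations: `U ∘ V`. -/
def relComp {X : Type*} (U V : Set (X × X)) : Set (X × X) :=
  {p | ∃ z, (p.1, z) ∈ U ∧ (z, p.2) ∈ V}

/-- `iterComp U n` is the `(n+1)`-fold composition `U ∘ U ∘ ⋯ ∘ U`. -/
def iterComp {X : Type*} (U : Set (X × X)) : ℕ → Set (X × X)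
  | 0 => U
  | n + 1 => relComp (iterComp U n) U

/-- A bornological coarse structure on a set `X`: a coarse structure (a collection of
entourages containing the diagonal and closed under subsets, finite unions, inverses and
compositions) together with a compatible bornology (a collection of bounded sets covering
`X` and closed under subsets and finite unions, such that controlled thickenings of bounded
sets are bounded). -/
structure BornCoarse (X : Type*) where
  /-- the entourages -/
  entourages : Set (Set (X × X))
  diag_mem : {p : X × X | p.1 = p.2} ∈ entourages
  subset_mem : ∀ ⦃U V : Set (X × X)⦄, U ∈ entourages → V ⊆ U → V ∈ entourages
  union_mem : ∀ ⦃U V : Set (X × X)⦄, U ∈ entourages → V ∈ entourages → U ∪ V ∈ entourages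
  inv_mem : ∀ ⦃U : Set (X × X)⦄, U ∈ entourages → {p : X × X | (p.2, p.1) ∈ U} ∈ entourages
  comp_mem : ∀ ⦃U V : Set (X × X)⦄, U ∈ entourages → V ∈ entourages →
    relComp U V ∈ entourages
  /-- the bounded subsets -/
  bounded : Set (Set X)
  covers : ∀ x : X, ∃ B ∈ bounded, x ∈ B
  empty_mem : (∅ : Set X) ∈ bounded
  bounded_subset : ∀ ⦃B C : Set X⦄, B ∈ bounded → C ⊆ B → C ∈ bounded
  bounded_union : ∀ ⦃B C : Set X⦄, B ∈ bounded → C ∈ bounded → B ∪ C ∈ bounded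
  compat : ∀ ⦃U : Set (X × X)⦄ ⦃B : Set X⦄, U ∈ entourages → B ∈ bounded →
    thick U B ∈ bounded

/-- A map between bornological coarse spaces is controlled if it maps entourages to
entourages. -/
def IsControlled {X X' : Type*} (S : BornCoarse X) (S' : BornCoarse X') (f : X → X') :
    Prop :=
  ∀ U ∈ S.entourages, (fun p : X × X => (f p.1, f p.2)) '' U ∈ S'.entourages

/-- A map between bornological coarse spaces is proper if preimages of bounded sets are
bounded. -/
def IsProper {X X' : Type*} (S : BornCoarse X) (S' : BornCoarse X') (f : X → X') : Prop :=
  ∀ B ∈ S'.bounded, f ⁻¹' B ∈ S.bounded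

/-- A morphism of bornological coarse spaces is a controlled and proper map. -/
def IsMorphism {X X' : Type*} (S : BornCoarse X) (S' : BornCoarse X') (f : X → X') : Prop :=
  IsControlled S S' f ∧ IsProper S S' f

noncomputable section

/-- The characteristic function of `B ⊆ X` as a bounded (continuous) function on the
discrete space `X`. -/
def chi {X : Type*} [TopologicalSpace X] [DiscreteTopology X] (B : Set X) :
    BoundedContinuousFunction X ℂ :=
  BoundedContinuousFunction.ofNormedAddCommGroup (B.indicator fun _ => (1 : ℂ))
    continuous_of_discreteTopology 1 fun x => by
      by_cases hx : x ∈ B <;> simp [Set.indicator_apply, hx]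

/-- A unital `*`-homomorphism from the `C*`-algebra `C(X)` of bounded functions on the
discrete space `X` into the bounded operators on the Hilbert space `H`. -/
abbrev CtrlRep (X : Type*) [TopologicalSpace X] [DiscreteTopology X] (H : Type*)
    [NormedAddCommGroup H] [InnerProductSpace ℂ H] [CompleteSpace H] :=
  BoundedContinuousFunction X ℂ →⋆ₐ[ℂ] (H →L[ℂ] H)

section

variable {X : Type*} [TopologicalSpace X] [DiscreteTopology X]
variable {H : Type*} [NormedAddCommGroup H] [InnerProductSpace ℂ H] [CompleteSpace H]
variable {H' : Type*} [NormedAddCommGroup H'] [InnerProductSpace ℂ H'] [CompleteSpace H']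

/-- `H(B) = φ(χ_B)H`, the subspace of vectors supported on `B`. -/
def Hsub (φ : CtrlRep X H) (B : Set X) : Set H :=
  Set.range ⇑(φ (chi B))

/-- `(H, φ)` is an `X`-controlled Hilbert space: `H(B)` is separable for every bounded
subset `B`. -/
def IsControlledHilbert (S : BornCoarse X) (φ : CtrlRep X H) : Prop :=
  ∀ B ∈ S.bounded, TopologicalSpace.IsSeparable (Hsub φ B)

/-- A bounded operator has controlled propagation if there is an entourage `U` with
`A(H(B)) ⊆ H'(U[B])` for every bounded `B`. -/
def HasCtrlProp (S : BornCoarse X) (φ : CtrlRep X H) (φ' : CtrlRep X H')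
    (A : H →L[ℂ] H') : Prop :=
  ∃ U ∈ S.entourages, ∀ B ∈ S.bounded, ⇑A '' Hsub φ B ⊆ Hsub φ' (thick U B)

/-- A bounded operator is quasi-local if there is an entourage `U` such that for every
`ε > 0` there is `n` with `‖φ'(χ_{B'}) A φ(χ_B)‖ ≤ ε` for all `Uⁿ`-separated `B, B'`. -/
def IsQuasiLocal (S : BornCoarse X) (φ : CtrlRep X H) (φ' : CtrlRep X H')
    (A : H →L[ℂ] H') : Prop :=
  ∃ U ∈ S.entourages, ∀ ε : ℝ, 0 < ε → ∃ n : ℕ, ∀ B B' : Set X,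
    thick (iterComp U n) B ∩ thick (iterComp U n) B' = ∅ →
      ‖φ' (chi B') ∘L A ∘L φ (chi B)‖ ≤ ε

/-- A bounded operator is locally compact if `φ(χ_B)A` and `Aφ(χ_B)` are compact for every
bounded `B`. -/
def IsLocallyCompactOp (S : BornCoarse X) (φ : CtrlRep X H) (A : H →L[ℂ] H) : Prop :=
  ∀ B ∈ S.bounded,
    IsCompactOperator ⇑(φ (chi B) ∘L A) ∧ IsCompactOperator ⇑(A ∘L φ (chi B))

/-- A controlled Hilbert space is locally finite if `H(B)` is finite-dimensional for every
bounded `B`. -/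
def IsLocallyFiniteRep (S : BornCoarse X) (φ : CtrlRep X H) : Prop :=
  ∀ B ∈ S.bounded, FiniteDimensional ℂ ↥(LinearMap.range (φ (chi B) : H →ₗ[ℂ] H))

/-- A controlled Hilbert space is ample if there is an entourage `U` such that `H(U[x])` is
infinite-dimensional for every point `x`. -/
def IsAmple (S : BornCoarse X) (φ : CtrlRep X H) : Prop :=
  ∃ U ∈ S.entourages, ∀ x : X,
    ¬FiniteDimensional ℂ ↥(LinearMap.range (φ (chi (thick U {x})) : H →ₗ[ℂ] H))

/-- A closed subspace `K ⊆ H` is a locally finite subspace if it carries an `X`-control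
making it a locally finite `X`-controlled Hilbert space such that the inclusion `K → H`
has controlled propagation. -/
def IsLocFinSubspace (S : BornCoarse X) (φ : CtrlRep X H) (K : Submodule ℂ H) : Prop :=
  ∃ hK : IsClosed (K : Set H),
    haveI : CompleteSpace K := hK.completeSpace_coe
    ∃ ψ : CtrlRep X ↥K, IsControlledHilbert S ψ ∧ IsLocallyFiniteRep S ψ ∧
      HasCtrlProp S ψ φ K.subtypeL

end

end

/-- The generating entourage `P_n` flipping the two points `(n, false)` and `(n, true)`. -/
def pairFlip (n : ℤ) : Set ((ℤ × Bool) × (ℤ × Bool)) :=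
  {((n, false), (n, true)), ((n, true), (n, false))}

/-- The coarse structure on `ℤ × Bool` generated by the entourages `P_n`. -/
def exampleCoarse : Set (Set ((ℤ × Bool) × (ℤ × Bool))) :=
  {V | ∃ F : Finset ℤ,
    V ⊆ {p : (ℤ × Bool) × (ℤ × Bool) | p.1 = p.2} ∪ ⋃ n ∈ F, pairFlip n}

open scoped Classical

/-! An entourage of `exampleCoarse` only links points inside the fibres `{n} × Bool` with `n`
in a finite set `F`; the relation `fiberEntourage F` of all such links is an equivalence
relation, so every power `Uⁿ` still leaves the two points over `m ∉ F` separated, while `A`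
moves `δ (m, false)` to `e^{-|m|} δ (m, true)`. This defeats quasi-locality. Conversely, if
`B` and `B'` are separated by the fibres with `|n| < N`, then `φ(χ_{B'}) A φ(χ_B)` sends the
basis to pairwise orthogonal vectors of norm at most `e^{-N}`, hence has norm at most `e^{-N}`. -/

open scoped InnerProductSpace

section

variable {𝕜 E F ι : Type*} [RCLike 𝕜] [NormedAddCommGroup E] [InnerProductSpace 𝕜 E]
  [NormedAddCommGroup F] [InnerProductSpace 𝕜 F]

theorem norm_sum_sq_of_pairwise_inner_eq_zero {w : ι → E}
    (hw : Pairwise fun i j => ⟪w i, w j⟫_𝕜 = 0) (s : Finset ι) :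
    ‖∑ i ∈ s, w i‖ ^ 2 = ∑ i ∈ s, ‖w i‖ ^ 2 := by
  classical
  induction s using Finset.induction_on with
  | empty => simp
  | insert a s ha ih =>
    have horth : ⟪w a, ∑ i ∈ s, w i⟫_𝕜 = 0 :=
      (inner_sum s w (w a)).trans <|
        Finset.sum_eq_zero fun i hi => hw (ne_of_mem_of_not_mem hi ha).symm
    rw [Finset.sum_insert ha, Finset.sum_insert ha, ← ih, sq, sq, sq,
      norm_add_sq_eq_norm_sq_add_norm_sq_of_inner_eq_zero _ _ horth]

theorem ContinuousLinearMap.opNorm_le_of_orthonormal {e : ι → E} (he : Orthonormal 𝕜 e)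
    (hdense : (Submodule.span 𝕜 (Set.range e)).topologicalClosure = ⊤) (T : E →L[𝕜] F)
    (horth : Pairwise fun i j => ⟪T (e i), T (e j)⟫_𝕜 = 0) {c : ℝ} (hc : 0 ≤ c)
    (hbound : ∀ i, ‖T (e i)‖ ≤ c) : ‖T‖ ≤ c := by
  refine T.opNorm_le_bound hc fun v => ?_
  have hclosed : IsClosed {v : E | ‖T v‖ ≤ c * ‖v‖} :=
    isClosed_le T.continuous.norm (continuous_const.mul continuous_norm)
  suffices hspan : (Submodule.span 𝕜 (Set.range e) : Set E) ⊆ {v | ‖T v‖ ≤ c * ‖v‖} by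
    have hv : v ∈ (Submodule.span 𝕜 (Set.range e)).topologicalClosure := hdense ▸ trivial
    exact closure_minimal hspan hclosed hv
  intro u hu
  obtain ⟨a, rfl⟩ := Finsupp.mem_span_range_iff_exists_finsupp.1 hu
  have hsq : ‖T (a.sum fun i x => x • e i)‖ ^ 2 ≤ (c * ‖a.sum fun i x => x • e i‖) ^ 2 := by
    simp only [Finsupp.sum, map_sum, map_smul, mul_pow]
    rw [norm_sum_sq_of_pairwise_inner_eq_zero (𝕜 := 𝕜) fun i j hij => by
        simp [inner_smul_left, inner_smul_right, horth hij],
      norm_sum_sq_of_pairwise_inner_eq_zero (𝕜 := 𝕜) fun i j hij => by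
        simp [inner_smul_left, inner_smul_right, he.2 hij],
      Finset.mul_sum]
    refine Finset.sum_le_sum fun i _ => ?_
    rw [norm_smul, norm_smul, he.1 i, mul_one, mul_pow, mul_comm]
    gcongr
    exact hbound i
  exact pow_le_pow_iff_left₀ (norm_nonneg _) (by positivity) two_ne_zero |>.1 hsq

end

theorem thick_mono {X : Type*} {U V : Set (X × X)} (h : U ⊆ V) (B : Set X) :
    thick U B ⊆ thick V B := fun _ ⟨b, hb, hxb⟩ => ⟨b, hb, h hxb⟩

def fiberEntourage (F : Finset ℤ) : Set ((ℤ × Bool) × (ℤ × Bool)) :=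
  {p | p.1 = p.2} ∪ ⋃ n ∈ F, pairFlip n

theorem mem_fiberEntourage {F : Finset ℤ} {x y : ℤ × Bool} :
    (x, y) ∈ fiberEntourage F ↔ x = y ∨ (x.1 = y.1 ∧ x.1 ∈ F) := by
  obtain ⟨a, b⟩ := x
  obtain ⟨c, d⟩ := y
  simp only [fiberEntourage, pairFlip, Set.mem_union, Set.mem_iUnion, Set.mem_insert_iff,
    Set.mem_singleton_iff, Prod.mk.injEq, exists_prop]
  cases b <;> cases d <;> grind

theorem mem_exampleCoarse {V : Set ((ℤ × Bool) × (ℤ × Bool))} :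
    V ∈ exampleCoarse ↔ ∃ F, V ⊆ fiberEntourage F :=
  Iff.rfl

theorem fiberEntourage_mono {F F' : Finset ℤ} (h : F ⊆ F') :
    fiberEntourage F ⊆ fiberEntourage F' := fun ⟨x, y⟩ hxy => by
  rw [mem_fiberEntourage] at hxy ⊢
  exact hxy.imp_right fun ⟨hfib, hF⟩ => ⟨hfib, h hF⟩

theorem relComp_fiberEntourage_subset (F F' : Finset ℤ) :
    relComp (fiberEntourage F) (fiberEntourage F') ⊆ fiberEntourage (F ∪ F') := by
  rintro ⟨x, y⟩ ⟨z, hxz, hzy⟩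
  rw [mem_fiberEntourage] at hxz hzy ⊢
  rw [Finset.mem_union]
  grind

theorem iterComp_subset_fiberEntourage {U : Set ((ℤ × Bool) × (ℤ × Bool))} {F : Finset ℤ}
    (hU : U ⊆ fiberEntourage F) : ∀ n, iterComp U n ⊆ fiberEntourage F
  | 0 => hU
  | n + 1 => fun _ ⟨z, hpz, hzq⟩ => by
    simpa using relComp_fiberEntourage_subset F F
      ⟨z, iterComp_subset_fiberEntourage hU n hpz, hU hzq⟩

theorem thick_fiberEntourage_subset (F : Finset ℤ) (B : Set (ℤ × Bool)) :
    thick (fiberEntourage F) B ⊆ B ∪ Prod.fst ⁻¹' F := by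
  rintro x ⟨b, hb, hxb⟩
  rw [mem_fiberEntourage] at hxb
  rcases hxb with rfl | ⟨-, hx⟩
  · exact Or.inl hb
  · exact Or.inr hx

theorem thick_fiberEntourage_singleton {F : Finset ℤ} {x : ℤ × Bool} (hx : x.1 ∉ F) :
    thick (fiberEntourage F) {x} = {x} := by
  ext y
  simp only [thick, Set.mem_singleton_iff, exists_eq_left, Set.mem_ofPred_eq,
    mem_fiberEntourage]
  grind

def exampleBornCoarse : BornCoarse (ℤ × Bool) where
  entourages := exampleCoarse
  diag_mem := ⟨∅, Set.subset_union_left⟩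
  subset_mem := fun _ _ ⟨F, hF⟩ hVU => ⟨F, hVU.trans hF⟩
  union_mem := fun U V hU hV => by
    obtain ⟨F, hF⟩ := mem_exampleCoarse.1 hU
    obtain ⟨F', hF'⟩ := mem_exampleCoarse.1 hV
    refine mem_exampleCoarse.2 ⟨F ∪ F', Set.union_subset ?_ ?_⟩
    · exact hF.trans (fiberEntourage_mono Finset.subset_union_left)
    · exact hF'.trans (fiberEntourage_mono Finset.subset_union_right)
  inv_mem := fun U hU => by
    obtain ⟨F, hF⟩ := mem_exampleCoarse.1 hU
    refine mem_exampleCoarse.2 ⟨F, fun ⟨x, y⟩ hyx => ?_⟩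
    have := hF hyx
    rw [mem_fiberEntourage] at this ⊢
    grind
  comp_mem := fun U V ⟨F, hF⟩ ⟨F', hF'⟩ => ⟨F ∪ F', fun _ ⟨z, h1, h2⟩ =>
    relComp_fiberEntourage_subset F F' ⟨z, hF h1, hF' h2⟩⟩
  bounded := {B | B.Finite}
  covers := fun x => ⟨{x}, Set.finite_singleton x, rfl⟩
  empty_mem := Set.finite_empty
  bounded_subset := fun _ _ hB hCB => hB.subset hCB
  bounded_union := fun _ _ hB hC => hB.union hC
  compat := fun U B hU hB => by
    obtain ⟨F, hF⟩ := mem_exampleCoarse.1 hU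
    refine ((hB.union ?_).subset (thick_fiberEntourage_subset F B)).subset (thick_mono hF B)
    exact (F.finite_toSet.prod Set.finite_univ).subset fun x hx => ⟨hx, trivial⟩

theorem thick_iterComp_fiber_disjoint {U : Set ((ℤ × Bool) × (ℤ × Bool))} {F : Finset ℤ}
    (hU : U ⊆ fiberEntourage F) {m : ℤ} (hm : m ∉ F) (n : ℕ) :
    thick (iterComp U n) {(m, false)} ∩ thick (iterComp U n) {(m, true)} = ∅ := by
  have hsub := thick_mono (iterComp_subset_fiberEntourage hU n)
  refine Set.eq_empty_of_subset_empty fun x ⟨hx₀, hx₁⟩ => ?_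
  have h₀ : x = (m, false) := by
    simpa [thick_fiberEntourage_singleton (x := (m, false)) hm] using hsub _ hx₀
  have h₁ : x = (m, true) := by
    simpa [thick_fiberEntourage_singleton (x := (m, true)) hm] using hsub _ hx₁
  exact absurd (h₀.symm.trans h₁) (by simp)

section

variable {H : Type*} [NormedAddCommGroup H] [InnerProductSpace ℂ H] [CompleteSpace H]
  {δ : ℤ × Bool → H} {φ : CtrlRep (ℤ × Bool) H} {A : H →L[ℂ] H}

theorem compress_apply_basis
    (hφ : ∀ (B : Set (ℤ × Bool)) (x : ℤ × Bool), φ (chi B) (δ x) = if x ∈ B then δ x else 0)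
    (hA₀ : ∀ n : ℤ, A (δ (n, false)) = (Real.exp (-|(n : ℝ)|) : ℂ) • δ (n, true))
    (hA₁ : ∀ n : ℤ, A (δ (n, true)) = 0) (B B' : Set (ℤ × Bool)) (x : ℤ × Bool) :
    (φ (chi B') ∘L A ∘L φ (chi B)) (δ x) =
      if x.2 = false ∧ x ∈ B ∧ (x.1, true) ∈ B' then
        (Real.exp (-|(x.1 : ℝ)|) : ℂ) • δ (x.1, true) else 0 := by
  obtain ⟨n, b⟩ := x
  by_cases hB : (n, b) ∈ B <;> by_cases hB' : (n, true) ∈ B' <;> cases b <;>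
    simp [hφ, hA₀, hA₁, hB, hB']

theorem norm_compress_le_of_separated (hONB : Orthonormal ℂ δ)
    (htotal : (Submodule.span ℂ (Set.range δ)).topologicalClosure = ⊤)
    (hφ : ∀ (B : Set (ℤ × Bool)) (x : ℤ × Bool), φ (chi B) (δ x) = if x ∈ B then δ x else 0)
    (hA₀ : ∀ n : ℤ, A (δ (n, false)) = (Real.exp (-|(n : ℝ)|) : ℂ) • δ (n, true))
    (hA₁ : ∀ n : ℤ, A (δ (n, true)) = 0) {F : Finset ℤ} {c : ℝ} (hc₀ : 0 ≤ c)
    (hc : ∀ n : ℤ, n ∉ F → Real.exp (-|(n : ℝ)|) ≤ c) {B B' : Set (ℤ × Bool)}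
    (hsep : thick (fiberEntourage F) B ∩ thick (fiberEntourage F) B' = ∅) :
    ‖φ (chi B') ∘L A ∘L φ (chi B)‖ ≤ c := by
  have hfib : ∀ x ∈ B, (x.1, true) ∈ B' → x.1 ∉ F := fun x hx hx' hxF =>
    Set.eq_empty_iff_forall_notMem.1 hsep (x.1, true)
      ⟨⟨x, hx, mem_fiberEntourage.2 (Or.inr ⟨rfl, hxF⟩)⟩,
        ⟨_, hx', mem_fiberEntourage.2 (Or.inl rfl)⟩⟩
  refine ContinuousLinearMap.opNorm_le_of_orthonormal hONB htotal _ ?_ hc₀ fun x => ?_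
  · intro x y hxy
    rw [compress_apply_basis hφ hA₀ hA₁, compress_apply_basis hφ hA₀ hA₁]
    split_ifs with hx hy
    · have hfst : x.1 ≠ y.1 := fun h => hxy (Prod.ext h (hx.1.trans hy.1.symm))
      rw [inner_smul_left, inner_smul_right, hONB.2 (by simpa using hfst), mul_zero, mul_zero]
    all_goals simp
  · rw [compress_apply_basis hφ hA₀ hA₁]
    split_ifs with hx
    · rw [norm_smul, hONB.1, mul_one, Complex.norm_real, Real.norm_of_nonneg (Real.exp_pos _).le]
      exact hc _ (hfib x hx.2.1 hx.2.2)
    · simpa using hc₀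

theorem exp_le_norm_compress_singleton (hONB : Orthonormal ℂ δ)
    (hφ : ∀ (B : Set (ℤ × Bool)) (x : ℤ × Bool), φ (chi B) (δ x) = if x ∈ B then δ x else 0)
    (hA₀ : ∀ n : ℤ, A (δ (n, false)) = (Real.exp (-|(n : ℝ)|) : ℂ) • δ (n, true))
    (hA₁ : ∀ n : ℤ, A (δ (n, true)) = 0) (m : ℤ) :
    Real.exp (-|(m : ℝ)|) ≤ ‖φ (chi {(m, true)}) ∘L A ∘L φ (chi {(m, false)})‖ := by
  have h := (φ (chi {(m, true)}) ∘L A ∘L φ (chi {(m, false)})).le_opNorm (δ (m, false))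
  rwa [compress_apply_basis hφ hA₀ hA₁, if_pos (by simp), norm_smul, hONB.1, hONB.1, mul_one,
    mul_one, Complex.norm_real, Real.norm_of_nonneg (Real.exp_pos _).le] at h

end

/-- The two notions of quasi-locality differ: on `X = ℤ × Bool` with the coarse structure
`exampleCoarse` (which is a coarse structure, compatible with the bornology of finite
subsets), the multiplication representation `φ` on `ℓ²(X; ℂ)` (with orthonormal basis `δ`)
and the operator `A` with `A δ_{(n,false)} = e^{-|n|} δ_{(n,true)}`, `A δ_{(n,true)} = 0`
satisfy: (a) for every `ε > 0` there is an entourage `U` with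
`‖φ(χ_{B'}) A φ(χ_B)‖ ≤ ε` for all `U`-separated `B, B'`; but (b) `A` is not quasi-local. -/
theorem quasiLocal_notions_differ {H : Type*} [NormedAddCommGroup H]
    [InnerProductSpace ℂ H] [CompleteSpace H]
    (δ : ℤ × Bool → H) (hONB : Orthonormal ℂ δ)
    (htotal : (Submodule.span ℂ (Set.range δ)).topologicalClosure = ⊤)
    (φ : CtrlRep (ℤ × Bool) H)
    (hφ : ∀ (B : Set (ℤ × Bool)) (x : ℤ × Bool),
      φ (chi B) (δ x) = if x ∈ B then δ x else 0)
    (A : H →L[ℂ] H)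
    (hA₀ : ∀ n : ℤ, A (δ (n, false)) = (Real.exp (-|(n : ℝ)|) : ℂ) • δ (n, true))
    (hA₁ : ∀ n : ℤ, A (δ (n, true)) = 0) :
    (∃ S : BornCoarse (ℤ × Bool), S.entourages = exampleCoarse ∧
      S.bounded = {B : Set (ℤ × Bool) | B.Finite}) ∧
    (∀ ε : ℝ, 0 < ε → ∃ U ∈ exampleCoarse, ∀ B B' : Set (ℤ × Bool),
      thick U B ∩ thick U B' = ∅ → ‖φ (chi B') ∘L A ∘L φ (chi B)‖ ≤ ε) ∧
    ¬ ∃ U ∈ exampleCoarse, ∀ ε : ℝ, 0 < ε → ∃ n : ℕ, ∀ B B' : Set (ℤ × Bool),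
      thick (iterComp U n) B ∩ thick (iterComp U n) B' = ∅ →
        ‖φ (chi B') ∘L A ∘L φ (chi B)‖ ≤ ε := by
  refine ⟨⟨exampleBornCoarse, rfl, rfl⟩, fun ε hε => ?_, ?_⟩
  · obtain ⟨N, hN⟩ := exists_nat_gt (-Real.log ε)
    refine ⟨fiberEntourage (Finset.Ioo (-(N : ℤ)) N), ⟨_, subset_rfl⟩, fun B B' hsep => ?_⟩
    refine norm_compress_le_of_separated hONB htotal hφ hA₀ hA₁ hε.le (fun n hn => ?_) hsep
    have hNn : (N : ℤ) ≤ |n| := by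
      rw [Finset.mem_Ioo, not_and_or, not_lt, not_lt] at hn
      exact le_abs'.2 hn
    have hNn' : (N : ℝ) ≤ |(n : ℝ)| := by exact_mod_cast hNn
    exact (Real.exp_le_exp.2 (by linarith)).trans_eq (Real.exp_log hε)
  · rintro ⟨U, ⟨F, hUF⟩, hquasi⟩
    obtain ⟨m, hm⟩ := Infinite.exists_notMem_finset F
    obtain ⟨n, hn⟩ := hquasi _ (half_pos (Real.exp_pos (-|(m : ℝ)|)))
    have hle := (exp_le_norm_compress_singleton hONB hφ hA₀ hA₁ m).trans
      (hn _ _ (thick_iterComp_fiber_disjoint hUF hm n))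
    linarith [Real.exp_pos (-|(m : ℝ)|)]
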